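/- Let v₀ ∈ ℂ be nonzero and let 0 < ε < |v₀|/√2. If v, w ∈ ℂ satisfy |v₀ − v| < ε and |v₀ − w| < ε (so in particular v, w ≠ 0), then the angle φ between v and w (viewed as vectors in the real inner product space ℂ) satisfies φ < π/2 and tan φ < 2ε√(|v₀|² − ε²) / (|v₀|² − 2ε²). -/

import Mathlib

/-!
A point within `ε` of `v₀` makes an angle less than `arcsin (ε / ‖v₀‖)` with `v₀`, since
`‖v₀‖ sin ∠(v₀, v)` is the distance from `v₀` to the line through `v`. By the triangle inequality
for angles, `∠(v, w) < 2 arcsin (ε / ‖v₀‖)`, which is below `π / 2` because `ε / ‖v₀‖ < sin (π / 4)`;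
the bound is then the tangent double-angle formula evaluated at `arcsin (ε / ‖v₀‖)`.
-/

open Real

namespace InnerProductGeometry

variable {V : Type*} [NormedAddCommGroup V] [InnerProductSpace ℝ V]

theorem sin_angle_mul_norm_le_norm_sub (x y : V) : sin (angle x y) * ‖x‖ ≤ ‖x - y‖ := by
  rcases eq_or_ne y 0 with rfl | hy
  · simp
  have hy' : 0 < ‖y‖ := norm_pos_iff.mpr hy
  refine le_of_mul_le_mul_right ?_ hy'
  rw [mul_assoc, sin_angle_mul_norm_mul_norm, sqrt_le_iff]
  refine ⟨by positivity, ?_⟩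
  rw [real_inner_self_eq_norm_sq, real_inner_self_eq_norm_sq, mul_pow, norm_sub_sq_real]
  nlinarith [sq_nonneg (‖y‖ ^ 2 - inner ℝ x y)]

theorem angle_lt_pi_div_two_of_norm_sub_lt {x y : V} (h : ‖x - y‖ < ‖x‖) :
    angle x y < π / 2 := by
  have hy : y ≠ 0 := by rintro rfl; simp at h
  have hinner : 0 < inner ℝ x y := by
    have := norm_sub_sq_real x y
    nlinarith [norm_nonneg (x - y), norm_pos_iff.mpr hy]
  rw [angle, arccos_lt_pi_div_two]
  exact div_pos hinner (mul_pos ((norm_nonneg _).trans_lt h) (norm_pos_iff.mpr hy))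

theorem angle_lt_arcsin_of_norm_sub_lt {x y : V} {ε : ℝ} (h : ‖x - y‖ < ε) (hε : ε ≤ ‖x‖) :
    angle x y < arcsin (ε / ‖x‖) := by
  have hx : 0 < ‖x‖ := (norm_nonneg _).trans_lt (h.trans_le hε)
  rw [lt_arcsin_iff_sin_lt' ⟨by linarith [angle_nonneg x y, pi_pos],
    angle_lt_pi_div_two_of_norm_sub_lt (h.trans_le hε)⟩, lt_div_iff₀ hx]
  exact (sin_angle_mul_norm_le_norm_sub x y).trans_lt h

end InnerProductGeometry

theorem Real.tan_two_mul_arcsin_div {ε r : ℝ} (hr : 0 < r) (h : ε ^ 2 < r ^ 2) :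
    tan (2 * arcsin (ε / r)) = 2 * ε * √(r ^ 2 - ε ^ 2) / (r ^ 2 - 2 * ε ^ 2) := by
  have hs : 0 < r ^ 2 - ε ^ 2 := sub_pos.mpr h
  have hsqrt : √(1 - (ε / r) ^ 2) = √(r ^ 2 - ε ^ 2) / r := by
    rw [← sqrt_sq hr.le, ← sqrt_div' _ (sq_nonneg r), sqrt_sq hr.le]
    congr 1
    field_simp
  have hs2 := sq_sqrt hs.le
  have hs0 := sqrt_pos.mpr hs
  rw [tan_two_mul, tan_arcsin, hsqrt]
  field_simp
  rw [hs2]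
  ring

open InnerProductGeometry in
theorem angle_tan_lt_of_both_close_general (v₀ : ℂ) (ε : ℝ) (hε : 0 < ε)
    (hεlt : ε < ‖v₀‖ / Real.sqrt 2) (v w : ℂ)
    (hv : ‖v₀ - v‖ < ε) (hw : ‖v₀ - w‖ < ε) :
    angle v w < Real.pi / 2 ∧
      Real.tan (angle v w) <
        2 * ε * Real.sqrt (‖v₀‖ ^ 2 - ε ^ 2) /
          (‖v₀‖ ^ 2 - 2 * ε ^ 2) := by
  have hεlt' : ε * √2 < ‖v₀‖ := (lt_div_iff₀ (by positivity)).mp hεlt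
  have hεr : ε < ‖v₀‖ := lt_of_le_of_lt (le_mul_of_one_le_right hε.le one_lt_sqrt_two.le) hεlt'
  have hr : 0 < ‖v₀‖ := hε.trans hεr
  have hθ : arcsin (ε / ‖v₀‖) < π / 4 := by
    rw [arcsin_lt_iff_lt_sin' ⟨by linarith [pi_pos], by linarith [pi_pos]⟩, sin_pi_div_four,
      div_lt_iff₀ hr]
    nlinarith [mul_self_sqrt (zero_le_two : (0 : ℝ) ≤ 2), sqrt_nonneg 2]
  have hangle : angle v w < 2 * arcsin (ε / ‖v₀‖) :=
    calc angle v w ≤ angle v₀ v + angle v₀ w := by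
          simpa only [angle_comm v v₀] using angle_le_angle_add_angle v v₀ w
      _ < 2 * arcsin (ε / ‖v₀‖) := by
          linarith [angle_lt_arcsin_of_norm_sub_lt hv hεr.le,
            angle_lt_arcsin_of_norm_sub_lt hw hεr.le]
  have hπ : 2 * arcsin (ε / ‖v₀‖) < π / 2 := by linarith
  refine ⟨hangle.trans hπ, ?_⟩
  rw [← tan_two_mul_arcsin_div hr (pow_lt_pow_left₀ hεr hε.le two_ne_zero)]
  exact tan_lt_tan_of_nonneg_of_lt_pi_div_two (angle_nonneg v w) hπ hangle

open InnerProductGeometry in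
/-- Let `v₀ ∈ ℂ` be nonzero and `0 < ε < |v₀|/√2`. If `v, w ∈ ℂ` satisfy
`|v₀ - v| < ε` and `|v₀ - w| < ε`, then the angle `φ` between `v` and `w`
(as vectors in the real inner product space `ℂ`) satisfies `φ < π/2` and
`tan φ < 2ε√(|v₀|² - ε²) / (|v₀|² - 2ε²)`. -/
theorem angle_tan_lt_of_both_close (v₀ : ℂ) (hv₀ : v₀ ≠ 0) (ε : ℝ) (hε : 0 < ε)
    (hεlt : ε < ‖v₀‖ / Real.sqrt 2) (v w : ℂ)
    (hv : ‖v₀ - v‖ < ε) (hw : ‖v₀ - w‖ < ε) :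
    angle v w < Real.pi / 2 ∧
      Real.tan (angle v w) <
        2 * ε * Real.sqrt (‖v₀‖ ^ 2 - ε ^ 2) /
          (‖v₀‖ ^ 2 - 2 * ε ^ 2) :=
  angle_tan_lt_of_both_close_general v₀ ε hε hεlt v w hv hw
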